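/- arXiv:0802.4187 — 2 statements merged into one kernel-verified Lean document; each statement's English description precedes it below -/
import Mathlib

section
/- Let ρ = (ρ_1, ρ_2) ∈ ℝ² be totally irrational. Suppose g ∈ Homeo₀(𝕋¹) is semi-conjugate to the rotation R_{ρ_1} : 𝕋¹ → 𝕋¹ by a continuous surjection φ (φ∘g = R_{ρ_1}∘φ), f ∈ Homeo₀(𝕋²) is semi-conjugate to R_ρ : 𝕋² → 𝕋² by a continuous surjection ψ (ψ∘f = R_ρ∘ψ), f is a skew-product over g (i.e. π_1∘f(x,y) = g(x) for all (x,y) ∈ 𝕋²), and f has a unique minimal set. Then there exists a semi-conjugacy ψ' between f and R_ρ with π_1∘ψ'(x,y) = φ(x) for all (x,y) ∈ 𝕋² (ψ' can be taken of the form ψ composed with a rotation in the first coordinate). -/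
open Filter Topology Set

noncomputable section

/-- The circle `𝕋¹ = ℝ/ℤ`. -/
abbrev T1 : Type := AddCircle (1 : ℝ)

/-- The two-torus `𝕋² = 𝕋¹ × 𝕋¹`. -/
abbrev T2 : Type := T1 × T1

/-- Projection `ℝ × ℝ → 𝕋²`. -/
def p2 : ℝ × ℝ → T2 := fun z => ((z.1 : T1), (z.2 : T1))

/-- `G` is a lift of `g : 𝕋¹ → 𝕋¹` commuting with integer translations; together with
`G` being a homeomorphism this encodes `g ∈ Homeo₀(𝕋¹)`. -/
def IsLift1 (G : ℝ ≃ₜ ℝ) (g : T1 → T1) : Prop :=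
  (∀ x : ℝ, ((G x : T1)) = g (x : T1)) ∧ ∀ (x : ℝ) (m : ℤ), G (x + m) = G x + m

/-- `F` is a lift of `f : 𝕋² → 𝕋²` commuting with integer translations; together with
`F` being a homeomorphism this encodes `f ∈ Homeo₀(𝕋²)`. -/
def IsLift2 (F : (ℝ × ℝ) ≃ₜ (ℝ × ℝ)) (f : T2 → T2) : Prop :=
  (∀ z : ℝ × ℝ, p2 (F z) = f (p2 z)) ∧
  ∀ (z : ℝ × ℝ) (m k : ℤ), F (z + ((m : ℝ), (k : ℝ))) = F z + ((m : ℝ), (k : ℝ))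

/-- `ρ = (ρ₁, ρ₂)` is totally irrational: `1, ρ₁, ρ₂` are linearly independent over `ℚ`. -/
def TotIrr2 (ρ : ℝ × ℝ) : Prop :=
  ∀ a b c : ℤ, (a : ℝ) * ρ.1 + (b : ℝ) * ρ.2 = (c : ℝ) → a = 0 ∧ b = 0

/-- `ψ` is a semi-conjugacy from `f` to `g` (a continuous surjection intertwining them). -/
def Semiconj1 (ψ : T1 → T1) (f g : T1 → T1) : Prop :=
  Continuous ψ ∧ Function.Surjective ψ ∧ ψ ∘ f = g ∘ ψ

/-- `ψ` is a semi-conjugacy from `f` to `g` (a continuous surjection intertwining them). -/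
def Semiconj2 (ψ : T2 → T2) (f g : T2 → T2) : Prop :=
  Continuous ψ ∧ Function.Surjective ψ ∧ ψ ∘ f = g ∘ ψ

/-- The rotation `R_a : 𝕋¹ → 𝕋¹`. -/
def R1 (a : ℝ) : T1 → T1 := fun x => x + (a : T1)

/-- The rotation `R_ρ : 𝕋² → 𝕋²`. -/
def R2 (ρ : ℝ × ℝ) : T2 → T2 := fun z => (z.1 + (ρ.1 : T1), z.2 + (ρ.2 : T1))

/-- `M` is a minimal set of `h`: nonempty, closed, invariant, with no proper nonempty
closed invariant subset. -/
def IsMinimalSet {α : Type*} [TopologicalSpace α] (h : α → α) (M : Set α) : Prop :=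
  M.Nonempty ∧ IsClosed M ∧ h '' M ⊆ M ∧
    ∀ M' ⊆ M, M'.Nonempty → IsClosed M' → h '' M' ⊆ M' → M' = M

/-! The skew-product structure makes `z ↦ (ψ z).1 - φ z.1` a continuous `f`-invariant function.
Its level sets are nonempty closed invariant sets, so each contains the unique minimal set of `f`;
hence it is a constant `c`, and `ψ' = ψ - (c, 0)` is the required semi-conjugacy. -/

section MinimalSets

variable {α : Type*} [TopologicalSpace α] [CompactSpace α] {f : α → α}

/- An intersection of invariant sets is invariant, so Zorn's lemma applies to
nonempty closed invariant sets ordered by reverse inclusion. -/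
theorem exists_isMinimalSet_subset {K : Set α} (hK : K.Nonempty) (hKc : IsClosed K)
    (hKi : f '' K ⊆ K) : ∃ M ⊆ K, IsMinimalSet f M := by
  set S : Set (Set α) := {A | A.Nonempty ∧ IsClosed A ∧ f '' A ⊆ A}
  obtain ⟨M, hMK, hM⟩ : ∃ M, M ⊆ K ∧ Minimal (· ∈ S) M := by
    refine zorn_superset_nonempty S (fun c hcS hchain hcne => ?_) K ⟨hK, hKc, hKi⟩
    have : Nonempty c := hcne.to_subtype
    have hdir : DirectedOn (· ⊇ ·) c := fun A hA B hB =>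
      (hchain.total hA hB).elim (fun hAB => ⟨A, hA, subset_rfl, hAB⟩)
        (fun hBA => ⟨B, hB, hBA, subset_rfl⟩)
    refine ⟨⋂₀ c, ⟨?_, isClosed_sInter fun A hA => (hcS hA).2.1, ?_⟩,
      fun A hA => sInter_subset_of_mem hA⟩
    · exact IsCompact.nonempty_sInter_of_directed_nonempty_isCompact_isClosed
        hdir (fun A hA => (hcS hA).1) (fun A hA => (hcS hA).2.1.isCompact)
        (fun A hA => (hcS hA).2.1)
    · rintro _ ⟨x, hx, rfl⟩
      exact mem_sInter.2 fun A hA => (hcS hA).2.2 ⟨x, mem_sInter.1 hx A hA, rfl⟩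
  refine ⟨M, hMK, hM.prop.1, hM.prop.2.1, hM.prop.2.2, fun M' hM'M hM' hM'c hM'i => ?_⟩
  exact hM'M.antisymm (hM.le_of_le ⟨hM', hM'c, hM'i⟩ hM'M)

theorem subset_of_forall_isMinimalSet_eq {M K : Set α} (huniq : ∀ M', IsMinimalSet f M' → M' = M)
    (hK : K.Nonempty) (hKc : IsClosed K) (hKi : f '' K ⊆ K) : M ⊆ K := by
  obtain ⟨M', hM'K, hM'⟩ := exists_isMinimalSet_subset hK hKc hKi
  exact huniq M' hM' ▸ hM'K

theorem Continuous.apply_eq_apply_of_comp_eq_of_existsUnique_isMinimalSet {β : Type*}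
    [TopologicalSpace β] [T1Space β] {h : α → β} (hh : Continuous h) (hinv : h ∘ f = h)
    (hmin : ∃! M, IsMinimalSet f M) (x y : α) : h x = h y := by
  obtain ⟨M, ⟨⟨w, hw⟩, -⟩, huniq⟩ := hmin
  have hlevel : ∀ x, h w = h x := fun x =>
    subset_of_forall_isMinimalSet_eq (K := h ⁻¹' {h x}) huniq ⟨x, rfl⟩
      (isClosed_singleton.preimage hh)
      (by rintro _ ⟨z, hz, rfl⟩; exact (congrFun hinv z).trans hz) hw
  rw [← hlevel x, hlevel y]

end MinimalSets

theorem Semiconj2.add_const {ψ f : T2 → T2} {ρ : ℝ × ℝ} (hψ : Semiconj2 ψ f (R2 ρ)) (v : T2) :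
    Semiconj2 (fun z => ψ z + v) f (R2 ρ) := by
  obtain ⟨hcont, hsurj, hconj⟩ := hψ
  refine ⟨hcont.add continuous_const, fun w => ?_, funext fun z => ?_⟩
  · obtain ⟨z, hz⟩ := hsurj (w - v)
    exact ⟨z, by simp [hz]⟩
  · have hz : ψ (f z) = R2 ρ (ψ z) := congrFun hconj z
    simp only [Function.comp_apply, hz, R2, Prod.ext_iff, Prod.fst_add, Prod.snd_add]
    constructor <;> abel

theorem fst_sub_comp_fst_invariant_of_skew {ρ : ℝ × ℝ} {g φ : T1 → T1} {f ψ : T2 → T2}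
    (hφ : φ ∘ g = R1 ρ.1 ∘ φ) (hψ : ψ ∘ f = R2 ρ ∘ ψ) (hskew : ∀ z : T2, (f z).1 = g z.1) :
    (fun z => (ψ z).1 - φ z.1) ∘ f = fun z => (ψ z).1 - φ z.1 := by
  funext z
  have hψz : ψ (f z) = R2 ρ (ψ z) := congrFun hψ z
  have hφz : φ (g z.1) = R1 ρ.1 (φ z.1) := congrFun hφ z.1
  simp only [Function.comp_apply, hψz, hskew z, hφz, R1, R2]
  abel

theorem exists_fibred_semiconjugacy_general (ρ : ℝ × ℝ)
    (g : T1 → T1)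
    (φ : T1 → T1) (hφ : Semiconj1 φ g (R1 ρ.1))
    (f : T2 → T2)
    (ψ : T2 → T2) (hψ : Semiconj2 ψ f (R2 ρ))
    (hskew : ∀ z : T2, (f z).1 = g z.1)
    (hmin : ∃! M : Set T2, IsMinimalSet f M) :
    ∃ ψ' : T2 → T2, Semiconj2 ψ' f (R2 ρ) ∧ ∀ z : T2, (ψ' z).1 = φ z.1 := by
  set offset : T2 → T1 := fun z => (ψ z).1 - φ z.1
  have hcont : Continuous offset := (continuous_fst.comp hψ.1).sub (hφ.1.comp continuous_fst)
  have hconst : ∀ z, offset z = offset 0 := fun z =>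
    hcont.apply_eq_apply_of_comp_eq_of_existsUnique_isMinimalSet
      (fst_sub_comp_fst_invariant_of_skew hφ.2.2 hψ.2.2 hskew) hmin z 0
  refine ⟨fun z => ψ z + (-offset 0, 0), hψ.add_const _, fun z => ?_⟩
  rw [← hconst z]
  simp [offset]

/-- **Lemma (fibred semi-conjugacies, (a)).** Let `ρ` be totally irrational, `g ∈
Homeo₀(𝕋¹)` semi-conjugate to `R_{ρ₁}` by `φ`, and `f ∈ Homeo₀(𝕋²)` a skew product over
`g` semi-conjugate to `R_ρ` by `ψ`. If `f` has a unique minimal set, then the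
semi-conjugacy can be chosen so that `π₁ ∘ ψ' = φ ∘ π₁`. -/
theorem exists_fibred_semiconjugacy (ρ : ℝ × ℝ) (hρ : TotIrr2 ρ)
    (g : T1 → T1) (G : ℝ ≃ₜ ℝ) (hg : IsLift1 G g)
    (φ : T1 → T1) (hφ : Semiconj1 φ g (R1 ρ.1))
    (f : T2 → T2) (F : (ℝ × ℝ) ≃ₜ (ℝ × ℝ)) (hf : IsLift2 F f)
    (ψ : T2 → T2) (hψ : Semiconj2 ψ f (R2 ρ))
    (hskew : ∀ z : T2, (f z).1 = g z.1)
    (hmin : ∃! M : Set T2, IsMinimalSet f M) :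
    ∃ ψ' : T2 → T2, Semiconj2 ψ' f (R2 ρ) ∧ ∀ z : T2, (ψ' z).1 = φ z.1 :=
  exists_fibred_semiconjugacy_general ρ g φ hφ f ψ hψ hskew hmin

end
end

section
/- Let f ∈ Homeo₀(𝕋^d) with lift F, let v ∈ ℝ^d \ {0} and λ ∈ ℝ, and suppose ρ(F) ⊆ λv + {v}^⊥ and sup_{n∈ℕ} |D_v(n,z)| ≤ C < ∞ for some z ∈ 𝕋^d. Then sup_{n∈ℕ} |D_v(n,z')| ≤ 2C for every z' in the closure of the forward orbit {f^n(z) : n ∈ ℕ} of z. -/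
open Filter Topology Set
open scoped RealInnerProductSpace

noncomputable section

abbrev E (d : ℕ) : Type := EuclideanSpace ℝ (Fin d)

/-- The integer lattice `ℤ^d` inside `ℝ^d`. -/
def intLattice (d : ℕ) : AddSubgroup (E d) where
  carrier := {x : E d | ∀ i, ∃ m : ℤ, x i = (m : ℝ)}
  zero_mem' := fun i => ⟨0, by simp⟩
  add_mem' := by
    intro a b ha hb i
    obtain ⟨m, hm⟩ := ha i
    obtain ⟨n, hn⟩ := hb i
    refine ⟨m + n, ?_⟩
    have h : (a + b) i = a i + b i := rfl
    rw [h, hm, hn]; push_cast; ring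
  neg_mem' := by
    intro a ha i
    obtain ⟨m, hm⟩ := ha i
    refine ⟨-m, ?_⟩
    have h : (-a) i = -(a i) := rfl
    rw [h, hm]; push_cast; ring

/-- The torus `𝕋^d = ℝ^d / ℤ^d`. -/
abbrev Torus (d : ℕ) : Type := E d ⧸ intLattice d

/-- The canonical projection `π : ℝ^d → 𝕋^d`. -/
def Tproj (d : ℕ) : E d → Torus d := QuotientAddGroup.mk

/-- `F` is a lift of `f`; together with `F` being a homeomorphism this encodes
`f ∈ Homeo₀(𝕋^d)` with lift `F`. -/
def IsLiftOf {d : ℕ} (F : E d ≃ₜ E d) (f : Torus d → Torus d) : Prop :=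
  (∀ z : E d, Tproj d (F z) = f (Tproj d z)) ∧
  (∀ z : E d, ∀ m ∈ intLattice d, F (z + m) = F z + m)

/-- The rotation set of `f` on `A ⊆ 𝕋^d`. -/
def rotSetOn {d : ℕ} (F : E d ≃ₜ E d) (A : Set (Torus d)) : Set (E d) :=
  {ρ | ∃ (n : ℕ → ℕ) (z : ℕ → E d), StrictMono n ∧ (∀ i, Tproj d (z i) ∈ A) ∧
      Tendsto (fun i => (n i : ℝ)⁻¹ • ((F : E d → E d)^[n i] (z i) - z i)) atTop (𝓝 ρ)}

/-- The rotation set `ρ(F)`. -/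
def rotSet {d : ℕ} (F : E d ≃ₜ E d) : Set (E d) := rotSetOn F Set.univ

/-- The deviation from the constant rotation, `D(n,z) = F^n(z) - z - nρ`. -/
def dev {d : ℕ} (F : E d ≃ₜ E d) (ρ : E d) (n : ℕ) (z : E d) : E d :=
  (F : E d → E d)^[n] z - z - (n : ℝ) • ρ

/-- The deviation parallel to `v`, `D_v(n,z) = ⟨F^n(z) - z - nρ, v⟩`. -/
def devIn {d : ℕ} (F : E d ≃ₜ E d) (ρ : E d) (v : E d) (n : ℕ) (z : E d) : ℝ :=
  ⟪dev F ρ n z, v⟫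

/-- `1, ρ_1, …, ρ_d` are linearly independent over `ℚ`. -/
def TotallyIrrational {d : ℕ} (ρ : E d) : Prop :=
  ∀ (k : Fin d → ℤ) (m : ℤ), (∑ i, (k i : ℝ) * ρ i) = (m : ℝ) → ∀ i, k i = 0

/-- `f` has bounded mean motion (w.r.t. the rotation vector `ρ`). -/
def BoundedMeanMotion {d : ℕ} (F : E d ≃ₜ E d) (ρ : E d) : Prop :=
  ∃ C : ℝ, ∀ (n : ℕ) (z : E d), ‖dev F ρ n z‖ ≤ C

/-- `f` is non-wandering: no nonempty open set is wandering. -/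
def NonWandering {d : ℕ} (f : Torus d → Torus d) : Prop :=
  ∀ U : Set (Torus d), IsOpen U → U.Nonempty → ∃ n : ℕ, 0 < n ∧ (U ∩ f^[n] '' U).Nonempty

/-- Projection of the deviation vector to the linear subspace `V`. -/
def devProj {d : ℕ} (F : E d ≃ₜ E d) (V : Submodule ℝ (E d)) (ρ : E d) (n : ℕ) (z : E d) : E d :=
  (Submodule.orthogonalProjection V (dev F ρ n z) : E d)

/-- The set of asymptotic directions `𝒜_V(z)`. -/
def asympDirs {d : ℕ} (F : E d ≃ₜ E d) (V : Submodule ℝ (E d)) (ρ : E d) (z : E d) :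
    Set (E d) :=
  {v | ‖v‖ = 1 ∧ ∀ ε > (0 : ℝ), ∀ r > (0 : ℝ), ∃ n : ℕ,
      r < ‖devProj F V ρ n z‖ ∧ ‖(‖devProj F V ρ n z‖)⁻¹ • devProj F V ρ n z - v‖ < ε}

/-- `S^+(v) = {w ∈ 𝕊^{d-1} : ⟨v,w⟩ > 0}`. -/
def Splus {d : ℕ} (v : E d) : Set (E d) := {w | ‖w‖ = 1 ∧ 0 < ⟪v, w⟫}

/-- `z` is `ε`-Lyapunov stable for `h`. -/
def LyapStable {X : Type*} [PseudoMetricSpace X] (h : X → X) (ε : ℝ) (z : X) : Prop :=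
  ∃ δ > (0 : ℝ), ∀ n : ℕ, ∀ w, dist z w < δ → dist (h^[n] z) (h^[n] w) < ε

/-- `ε_f`, the largest `ε` such that `ε`-close points have `1/2`-close images. -/
def epsF {d : ℕ} (f : Torus d → Torus d) : ℝ :=
  sSup {ε : ℝ | 0 < ε ∧ ∀ z z' : Torus d, dist z z' < ε → dist (f z) (f z') < 1 / 2}

/-- `ℤ`-indexed iterates of a homeomorphism. -/
def iterZ {d : ℕ} (F : E d ≃ₜ E d) : ℤ → E d → E d
  | .ofNat n => (F : E d → E d)^[n]
  | .negSucc n => (F.symm : E d → E d)^[n + 1]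

/-- `ℤ`-indexed deviations parallel to `v`. -/
def devZIn {d : ℕ} (F : E d ≃ₜ E d) (ρ v : E d) (n : ℤ) (z : E d) : ℝ :=
  ⟪iterZ F n z - z - (n : ℝ) • ρ, v⟫

/-!
The deviations satisfy the cocycle identity `D_v(n, F^k z) = D_v(n + k, z) - D_v(k, z)`, so
`|D_v(n, ·)| ≤ 2C` along the forward orbit of `z`. Since `F` commutes with integer translations,
`D_v(n, ·)` is constant on the fibres of `π`, so the bound holds on the whole preimage of the
orbit. As `π` is open, the preimage of the orbit closure is the closure of that preimage, and
the bound passes to it by continuity.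
-/

namespace IsLiftOf

variable {d : ℕ} {F : E d ≃ₜ E d} {f : Torus d → Torus d}

theorem iterate_add_lattice (hlift : IsLiftOf F f) (k : ℕ) (a : E d) {m : E d}
    (hm : m ∈ intLattice d) : (F : E d → E d)^[k] (a + m) = (F : E d → E d)^[k] a + m := by
  induction k generalizing a with
  | zero => rfl
  | succ k ih => rw [Function.iterate_succ_apply, Function.iterate_succ_apply, hlift.2 a m hm, ih]

theorem tproj_iterate (hlift : IsLiftOf F f) (k : ℕ) (a : E d) :
    Tproj d ((F : E d → E d)^[k] a) = f^[k] (Tproj d a) := by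
  induction k with
  | zero => rfl
  | succ k ih => rw [Function.iterate_succ_apply', Function.iterate_succ_apply', ← ih, hlift.1]

theorem devIn_eq_of_tproj_eq (hlift : IsLiftOf F f) (ρ v : E d) (n : ℕ) {a b : E d}
    (hab : Tproj d a = Tproj d b) : devIn F ρ v n a = devIn F ρ v n b := by
  obtain ⟨m, hm, rfl⟩ : ∃ m ∈ intLattice d, b = a + m :=
    ⟨-a + b, QuotientAddGroup.eq.mp hab, by abel⟩
  simp only [devIn, dev, hlift.iterate_add_lattice n a hm]
  congr 1
  abel

end IsLiftOf

section Deviation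

variable {d : ℕ} (F : E d ≃ₜ E d) (ρ v : E d)

theorem continuous_devIn (n : ℕ) : Continuous (devIn F ρ v n) :=
  (((F.continuous.iterate n).sub continuous_id).sub continuous_const).inner continuous_const

theorem devIn_iterate (n k : ℕ) (z : E d) :
    devIn F ρ v n ((F : E d → E d)^[k] z) = devIn F ρ v (n + k) z - devIn F ρ v k z := by
  simp only [devIn, dev, ← inner_sub_left, Function.iterate_add_apply, Nat.cast_add,
    add_smul]
  congr 1
  abel

theorem abs_devIn_iterate_le {z : E d} {C : ℝ} (hC : ∀ n, |devIn F ρ v n z| ≤ C) (n k : ℕ) :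
    |devIn F ρ v n ((F : E d → E d)^[k] z)| ≤ 2 * C := by
  rw [devIn_iterate]
  linarith [abs_sub (devIn F ρ v (n + k) z) (devIn F ρ v k z), hC (n + k), hC k]

end Deviation

theorem devIn_le_two_mul_on_orbit_closure_general {d : ℕ} (f : Torus d → Torus d)
    (F : E d ≃ₜ E d) (hlift : IsLiftOf F f) (v : E d) (lam : ℝ)
    (z : E d) (C : ℝ) (hC : ∀ n : ℕ, |devIn F (lam • v) v n z| ≤ C) :
    ∀ z' : E d,
      Tproj d z' ∈ closure (Set.range fun n : ℕ => f^[n] (Tproj d z)) →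
      ∀ n : ℕ, |devIn F (lam • v) v n z'| ≤ 2 * C := by
  intro z' hz' n
  have hz'_lift : z' ∈ closure (Tproj d ⁻¹' Set.range fun k : ℕ => f^[k] (Tproj d z)) :=
    (QuotientAddGroup.isOpenMap_coe.preimage_closure_eq_closure_preimage
      continuous_quot_mk _).subset hz'
  have horbit : Tproj d ⁻¹' (Set.range fun k : ℕ => f^[k] (Tproj d z)) ⊆
      {a | |devIn F (lam • v) v n a| ≤ 2 * C} := by
    rintro a ⟨k, hk⟩
    rw [Set.mem_ofPred_eq,
      ← hlift.devIn_eq_of_tproj_eq _ _ n ((hlift.tproj_iterate k z).trans hk)]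
    exact abs_devIn_iterate_le F _ v hC n k
  exact closure_minimal horbit
    (isClosed_le (continuous_devIn F _ v n).abs continuous_const) hz'_lift

/-- **Lemma (orbit closure).** If `ρ(F) ⊆ λv + {v}^⊥` and `sup_{n∈ℕ} |D_v(n,z)| ≤ C`,
then `sup_{n∈ℕ} |D_v(n,z')| ≤ 2C` for every `z'` in the closure of the forward orbit
of `z`. -/
theorem devIn_le_two_mul_on_orbit_closure {d : ℕ} (f : Torus d → Torus d)
    (F : E d ≃ₜ E d) (hlift : IsLiftOf F f) (v : E d) (hv : v ≠ 0) (lam : ℝ)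
    (hrot : ∀ ρ' ∈ rotSet F, ⟪ρ' - lam • v, v⟫ = 0)
    (z : E d) (C : ℝ) (hC : ∀ n : ℕ, |devIn F (lam • v) v n z| ≤ C) :
    ∀ z' : E d,
      Tproj d z' ∈ closure (Set.range fun n : ℕ => f^[n] (Tproj d z)) →
      ∀ n : ℕ, |devIn F (lam • v) v n z'| ≤ 2 * C :=
  devIn_le_two_mul_on_orbit_closure_general f F hlift v lam z C hC

end
end
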